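/- arXiv:1401.4911 — 6 statements merged into one kernel-verified Lean document; each statement's English description precedes it below -/
import Mathlib

section
/- Let f : ℝ → ℝ be convex. Then for all x₁, x₂, y₁, y₂ ∈ ℝ, f(x₁ - x₂) + f(y₁ - y₂) ≥ f(max x₁ y₁ - max x₂ y₂) + f(min x₁ y₁ - min x₂ y₂). -/
/-! The pair `(max x₁ y₁ - max x₂ y₂, min x₁ y₁ - min x₂ y₂)` has the same sum as
`(x₁ - x₂, y₁ - y₂)`, and its first entry lies between the two entries of the latter. For convex
`f`, the sum `f u + f v` with `u + v` fixed only grows as `u` and `v` move apart. -/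

theorem ConvexOn.add_le_add_of_mem_segment {𝕜 E β : Type*} [Field 𝕜] [LinearOrder 𝕜]
    [IsStrictOrderedRing 𝕜] [AddCommGroup E] [Module 𝕜 E] [AddCommMonoid β] [PartialOrder β]
    [IsOrderedAddMonoid β] [Module 𝕜 β] {s : Set E} {f : E → β} (hf : ConvexOn 𝕜 s f)
    {a b u v : E} (ha : a ∈ s) (hb : b ∈ s) (hu : u ∈ segment 𝕜 a b) (huv : u + v = a + b) :
    f u + f v ≤ f a + f b := by
  obtain ⟨θ, η, hθ, hη, hθη, rfl⟩ := hu
  have hv : v = η • a + θ • b := by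
    linear_combination (norm := module) huv - hθη • (a + b)
  calc f (θ • a + η • b) + f v ≤ (θ • f a + η • f b) + (η • f a + θ • f b) :=
        add_le_add (hf.2 ha hb hθ hη hθη) (hv ▸ hf.2 ha hb hη hθ (by rw [add_comm, hθη]))
    _ = f a + f b := by
        rw [add_add_add_comm, ← add_smul, add_comm (η • f b), ← add_smul, hθη, one_smul, one_smul]

theorem min_sub_le_max_sub_max {α : Type*} [AddCommGroup α] [LinearOrder α]
    [IsOrderedAddMonoid α] (a b c d : α) : min (a - c) (b - d) ≤ max a b - max c d := by
  grind

theorem submodular_of_convex_diff (f : ℝ → ℝ) (hf : ConvexOn ℝ Set.univ f)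
    (x₁ x₂ y₁ y₂ : ℝ) :
    f (max x₁ y₁ - max x₂ y₂) + f (min x₁ y₁ - min x₂ y₂) ≤ f (x₁ - x₂) + f (y₁ - y₂) := by
  have hmem : max x₁ y₁ - max x₂ y₂ ∈ segment ℝ (x₁ - x₂) (y₁ - y₂) := by
    rw [segment_eq_Icc']
    exact ⟨min_sub_le_max_sub_max .., max_sub_max_le_max ..⟩
  have hsum : (max x₁ y₁ - max x₂ y₂) + (min x₁ y₁ - min x₂ y₂) = (x₁ - x₂) + (y₁ - y₂) := by
    linarith [max_add_min x₁ y₁, max_add_min x₂ y₂]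
  exact hf.add_le_add_of_mem_segment trivial trivial hmem hsum
end

section
/- The functional E(u) = ∬_{ℝᵈ×ℝᵈ} |u(x)-u(y)|² / |x-y|^{d+2s} dx dy is submodular with respect to the pointwise lattice structure: for all measurable u, v : ℝᵈ → ℝ, E(u ⊓ v) + E(u ⊔ v) ≤ E(u) + E(v), where u ⊓ v and u ⊔ v denote the pointwise minimum and maximum. -/
open MeasureTheory
open scoped ENNReal

/-- The fractional (Gagliardo) energy functional with exponent 2 and parameter `s`. -/
noncomputable def fracEnergy (d : ℕ) (s : ℝ) (u : EuclideanSpace ℝ (Fin d) → ℝ) : ℝ≥0∞ :=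
  ∫⁻ p : EuclideanSpace ℝ (Fin d) × EuclideanSpace ℝ (Fin d),
    ENNReal.ofReal (|u p.1 - u p.2| ^ 2 / dist p.1 p.2 ^ ((d : ℝ) + 2 * s))

/-! The integrand of `fracEnergy` is submodular pointwise: `(a, c) ↦ |a - c|²` is submodular on
`ℝ × ℝ` because its mixed second derivative is `-2 ≤ 0`. Integrating preserves this, since the lower
Lebesgue integral is superadditive and is additive as soon as one summand is measurable. -/

lemma sq_abs_min_sub_min_add_sq_abs_max_sub_max_le {α : Type*} [CommRing α] [LinearOrder α]
    [IsStrictOrderedRing α] (a b c e : α) :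
    |min a c - min b e| ^ 2 + |max a c - max b e| ^ 2 ≤ |a - b| ^ 2 + |c - e| ^ 2 := by
  simp only [sq_abs]
  rcases le_total a c with hac | hac <;> rcases le_total b e with hbe | hbe <;>
    simp only [min_eq_left, min_eq_right, max_eq_left, max_eq_right, hac, hbe] <;> nlinarith

lemma ofReal_div_add_ofReal_div_le {a b a' b' w : ℝ} (ha' : 0 ≤ a') (hb' : 0 ≤ b') (ha : 0 ≤ a)
    (hb : 0 ≤ b) (hw : 0 ≤ w) (h : a' + b' ≤ a + b) :
    ENNReal.ofReal (a' / w) + ENNReal.ofReal (b' / w) ≤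
      ENNReal.ofReal (a / w) + ENNReal.ofReal (b / w) := by
  rw [← ENNReal.ofReal_add (by positivity) (by positivity),
    ← ENNReal.ofReal_add (by positivity) (by positivity), ← add_div, ← add_div]
  exact ENNReal.ofReal_le_ofReal (div_le_div_of_nonneg_right h hw)

theorem lintegral_ofReal_sq_abs_sub_div_submodular {X : Type*} [MeasurableSpace X]
    (μ : Measure (X × X)) {w : X × X → ℝ} (hw : Measurable w) (hw0 : 0 ≤ w) (u v : X → ℝ)
    (hu : Measurable u) :
    ∫⁻ p, ENNReal.ofReal (|min (u p.1) (v p.1) - min (u p.2) (v p.2)| ^ 2 / w p) ∂μ +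
        ∫⁻ p, ENNReal.ofReal (|max (u p.1) (v p.1) - max (u p.2) (v p.2)| ^ 2 / w p) ∂μ ≤
      ∫⁻ p, ENNReal.ofReal (|u p.1 - u p.2| ^ 2 / w p) ∂μ +
        ∫⁻ p, ENNReal.ofReal (|v p.1 - v p.2| ^ 2 / w p) ∂μ := by
  calc _ ≤ _ := le_lintegral_add _ _
    _ ≤ _ := lintegral_mono fun p =>
          ofReal_div_add_ofReal_div_le (by positivity) (by positivity) (by positivity)
            (by positivity) (hw0 p) (sq_abs_min_sub_min_add_sq_abs_max_sub_max_le _ _ _ _)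
    _ = _ := lintegral_add_left (by fun_prop) _

theorem fracEnergy_submodular_general (d : ℕ) (s : ℝ)
    (u v : EuclideanSpace ℝ (Fin d) → ℝ) (hu : Measurable u) :
    fracEnergy d s (fun x => min (u x) (v x)) + fracEnergy d s (fun x => max (u x) (v x)) ≤
      fracEnergy d s u + fracEnergy d s v := by
  unfold fracEnergy
  exact lintegral_ofReal_sq_abs_sub_div_submodular volume
    (w := fun p => dist p.1 p.2 ^ ((d : ℝ) + 2 * s)) (by fun_prop) (fun _ => by positivity) u v hu

theorem fracEnergy_submodular (d : ℕ) (hd : 1 ≤ d) (s : ℝ) (hs0 : 0 < s) (hs1 : s < 1)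
    (u v : EuclideanSpace ℝ (Fin d) → ℝ) (hu : Measurable u) (hv : Measurable v) :
    fracEnergy d s (fun x => min (u x) (v x)) + fracEnergy d s (fun x => max (u x) (v x)) ≤
      fracEnergy d s u + fracEnergy d s v :=
  fracEnergy_submodular_general d s u v hu
end

section
/- Let B be a topological vector lattice and E : B → ℝ ∪ {+∞} a convex, submodular functional (i.e. E(x ⊓ y) + E(x ⊔ y) ≤ E(x) + E(y) for all x, y). Then the subdifferential of E is T-monotone: for all x, y ∈ B, x* ∈ ∂E(x), y* ∈ ∂E(y), one has ⟨x* - y*, (x - y) ⊔ 0⟩ ≥ 0. -/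
/-! Submodularity compares `E` at `x ⊓ y = x - (x - y)⁺` and `x ⊔ y = y + (x - y)⁺` with `E` at
`x` and `y`. Adding the subgradient inequalities of `x*` at `x` (tested at `x ⊓ y`) and of `y*`
at `y` (tested at `x ⊔ y`) therefore gives `⟨y* - x*, (x - y)⁺⟩ ≤ 0`. -/

open scoped Topology

/-- The subdifferential of an `EReal`-valued functional, as a set of continuous
linear functionals.  It is empty outside of the domain of `E`. -/
def ESubdiff {B : Type*} [AddCommGroup B] [Module ℝ B] [TopologicalSpace B]
    (E : B → EReal) (x : B) : Set (B →L[ℝ] ℝ) :=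
  {xs | E x ≠ ⊤ ∧ ∀ z : B, ((xs (z - x) : ℝ) : EReal) + E x ≤ E z}

namespace ESubdiff

variable {B : Type*} [AddCommGroup B] [Module ℝ B] [TopologicalSpace B]
  {E : B → EReal} {x y : B} {xs ys : B →L[ℝ] ℝ}

theorem apply_sub_add_apply_sub_nonpos (hx : xs ∈ ESubdiff E x) (hy : ys ∈ ESubdiff E y)
    (hx_bot : E x ≠ ⊥) (hy_bot : E y ≠ ⊥) {u v : B} (huv : E u + E v ≤ E x + E y) :
    xs (u - x) + ys (v - y) ≤ 0 := by
  lift E x to ℝ using ⟨hx.1, hx_bot⟩ with r hr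
  lift E y to ℝ using ⟨hy.1, hy_bot⟩ with s hs
  have hsum : ((xs (u - x) + r + (ys (v - y) + s) : ℝ) : EReal) ≤ ((r + s : ℝ) : EReal) := by
    push_cast
    calc _ ≤ E u + E v := add_le_add (hr ▸ hx.2 u) (hs ▸ hy.2 v)
      _ ≤ _ := huv
  linarith [EReal.coe_le_coe_iff.mp hsum]

end ESubdiff

theorem subdiff_Tmonotone_of_submodular_general
    {B : Type*} [AddCommGroup B] [Module ℝ B] [Lattice B]
    [TopologicalSpace B]
    [CovariantClass B B (· + ·) (· ≤ ·)]
    (E : B → EReal) (hbot : ∀ x, E x ≠ ⊥)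
    (hsub : ∀ x y : B, E (x ⊓ y) + E (x ⊔ y) ≤ E x + E y)
    (x y : B) (xs ys : B →L[ℝ] ℝ) (hx : xs ∈ ESubdiff E x) (hy : ys ∈ ESubdiff E y) :
    0 ≤ (xs - ys) ((x - y) ⊔ 0) := by
  have key := ESubdiff.apply_sub_add_apply_sub_nonpos hx hy (hbot x) (hbot y) (hsub x y)
  rw [inf_eq_sub_posPart_sub, sup_eq_add_posPart_sub, sub_sub_cancel_left, add_sub_cancel_left,
    map_neg] at key
  rw [sub_apply, sub_nonneg, ← posPart_def]
  linarith

theorem subdiff_Tmonotone_of_submodular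
    {B : Type*} [AddCommGroup B] [Module ℝ B] [Lattice B]
    [TopologicalSpace B] [IsTopologicalAddGroup B] [ContinuousSMul ℝ B]
    [T2Space B] [LocallyConvexSpace ℝ B]
    [CovariantClass B B (· + ·) (· ≤ ·)]
    (hsmul : ∀ (c : ℝ) (x : B), 0 ≤ c → 0 ≤ x → 0 ≤ c • x)
    (E : B → EReal) (hbot : ∀ x, E x ≠ ⊥)
    (hconv : ∀ (x y : B) (t : ℝ), 0 ≤ t → t ≤ 1 →
      E (t • x + (1 - t) • y) ≤ (t : EReal) * E x + ((1 - t) : EReal) * E y)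
    (hsub : ∀ x y : B, E (x ⊓ y) + E (x ⊔ y) ≤ E x + E y)
    (x y : B) (xs ys : B →L[ℝ] ℝ) (hx : xs ∈ ESubdiff E x) (hy : ys ∈ ESubdiff E y) :
    0 ≤ (xs - ys) ((x - y) ⊔ 0) :=
  subdiff_Tmonotone_of_submodular_general E hbot hsub x y xs ys hx hy
end

section
/- Let B be a topological vector lattice and E : B → ℝ a convex functional whose subdifferential is everywhere nonempty and T-monotone (⟨x* - y*, (x - y) ⊔ 0⟩ ≥ 0 for all x* ∈ ∂E(x), y* ∈ ∂E(y)). Then E is submodular: E(x ⊓ y) + E(x ⊔ y) ≤ E(x) + E(y) for all x, y ∈ B. -/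
/-- The subdifferential of a real-valued functional, as a set of continuous
linear functionals. -/
def RSubdiff {B : Type*} [AddCommGroup B] [Module ℝ B] [TopologicalSpace B]
    (E : B → ℝ) (x : B) : Set (B →L[ℝ] ℝ) :=
  {xs | ∀ z : B, xs (z - x) ≤ E z - E x}

/-!
Put `w = (x - y)⁺`, so that `x ⊔ y = y + w` and `x ⊓ y = x - w`. For points `y + s • w` and
`x ⊓ y + t • w` of the two parallel segments with `s ≤ t`, the difference is
`(t - s) • w - (x - y)⁻`, whose positive part is `(t - s) • w` because `w` and `(x - y)⁻` are
disjoint. T-monotonicity thus says that the slope of `E` in direction `w` at `y + s • w` is at most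
its slope at `x ⊓ y + t • w` whenever `s < t`. Comparing each step of a Riemann-type partition of
the first segment with the step of the second one shifted two mesh widths to the right, and letting
the mesh go to zero, gives `E (x ⊔ y) - E y ≤ E x - E (x ⊓ y)`.
-/

open Filter

section RealSubgradients

variable {g h ψ χ : ℝ → ℝ}

theorem monotone_of_forall_add_mul_sub_le (hh : ∀ t u, h t + χ t * (u - t) ≤ h u) :
    Monotone χ := by
  intro t u htu
  rcases htu.eq_or_lt with rfl | hlt
  · exact le_rfl
  nlinarith [hh t u, hh u t]

theorem sub_le_sub_shift_of_subgradient_lt (hg : ∀ s u, g s + ψ s * (u - s) ≤ g u)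
    (hh : ∀ t u, h t + χ t * (u - t) ≤ h u) (hψχ : ∀ s t, s < t → ψ s ≤ χ t)
    {s t t' : ℝ} (hst : s ≤ t) (htt' : t < t') :
    g t - g s ≤ h (t' + (t - s)) - h t' := by
  have hg' := hg t s
  have hh' := hh t' (t' + (t - s))
  have := mul_le_mul_of_nonneg_right (hψχ t t' htt') (sub_nonneg.2 hst)
  simp only [add_sub_cancel_left] at hh'
  linarith

theorem sub_le_sub_shift_mul_of_subgradient_lt (hg : ∀ s u, g s + ψ s * (u - s) ≤ g u)
    (hh : ∀ t u, h t + χ t * (u - t) ≤ h u) (hψχ : ∀ s t, s < t → ψ s ≤ χ t)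
    (a : ℝ) {d : ℝ} (hd : 0 < d) (n : ℕ) :
    g (a + n * d) - g a ≤ h (a + (n + 2) * d) - h (a + 2 * d) := by
  induction n with
  | zero => simp
  | succ n ih =>
    have step := sub_le_sub_shift_of_subgradient_lt hg hh hψχ
      (s := a + n * d) (t := a + (n + 1) * d) (t' := a + (n + 2) * d) (by nlinarith) (by nlinarith)
    push_cast
    rw [show a + (n + 2) * d + (a + (n + 1) * d - (a + n * d)) = a + (n + 1 + 2) * d by ring]
      at step
    linarith

theorem sub_shift_le_sub_add_of_subgradient (hh : ∀ t u, h t + χ t * (u - t) ≤ h u)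
    (a b ε : ℝ) :
    h (b + ε) - h (a + ε) ≤ h b - h a + ε * (χ (b + ε) - χ a) := by
  have hb := hh (b + ε) b
  have ha := hh a (a + ε)
  simp only [sub_add_cancel_left, add_sub_cancel_left] at hb ha
  linarith

theorem sub_le_sub_of_subgradient_lt (hg : ∀ s u, g s + ψ s * (u - s) ≤ g u)
    (hh : ∀ t u, h t + χ t * (u - t) ≤ h u) (hψχ : ∀ s t, s < t → ψ s ≤ χ t)
    {a b : ℝ} (hab : a ≤ b) :
    g b - g a ≤ h b - h a := by
  rcases hab.eq_or_lt with rfl | hab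
  · simp
  set K := 2 * (χ (b + 2 * (b - a)) - χ a)
  have hbound : ∀ n : ℕ, 0 < n → g b - g a ≤ h b - h a + (b - a) / n * K := by
    intro n hn
    have hn' : (0 : ℝ) < n := by exact_mod_cast hn
    set d := (b - a) / n
    have hd : 0 < d := by positivity
    have hnd : a + n * d = b := by rw [mul_div_cancel₀ _ hn'.ne']; ring
    have hd_le : d ≤ b - a := div_le_self (by linarith) (by exact_mod_cast hn)
    have htel := sub_le_sub_shift_mul_of_subgradient_lt hg hh hψχ a hd n
    have hshift := sub_shift_le_sub_add_of_subgradient hh a b (2 * d)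
    have hχ : χ (b + 2 * d) ≤ χ (b + 2 * (b - a)) :=
      monotone_of_forall_add_mul_sub_le hh (by linarith)
    rw [show a + (n + 2) * d = b + 2 * d by rw [← hnd]; ring, hnd] at htel
    linarith [mul_le_mul_of_nonneg_left hχ (by positivity : (0 : ℝ) ≤ 2 * d)]
  refine ge_of_tendsto (x := atTop) (f := fun n : ℕ => h b - h a + (b - a) / n * K) ?_ ?_
  · simpa using ((tendsto_const_div_atTop_nhds_zero_nat (b - a)).mul_const K).const_add (h b - h a)
  · filter_upwards [eventually_gt_atTop 0] with n hn using hbound n hn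

end RealSubgradients

section LatticeModule

variable {B : Type*} [AddCommGroup B] [Lattice B]

theorem posPart_sub_eq_of_inf_eq_zero [AddLeftMono B] {u v : B} (huv : u ⊓ v = 0) :
    (u - v)⁺ = u := by
  have hsup : u ⊔ v = u + v := by simpa [huv] using inf_add_sup u v
  rw [posPart_def, ← sub_self v, ← sup_sub, hsup, add_sub_cancel_right]

variable [IsOrderedAddMonoid B] [Module ℝ B] [PosSMulMono ℝ B]

theorem smul_inf_eq_zero_of_inf_eq_zero {u v : B} (huv : u ⊓ v = 0) {c : ℝ} (hc : 0 ≤ c) :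
    c • u ⊓ v = 0 := by
  have hu : 0 ≤ u := huv ▸ inf_le_left
  have hv : 0 ≤ v := huv ▸ inf_le_right
  have hc₁ : 0 < c + 1 := by linarith
  have hinv : 0 ≤ (c + 1)⁻¹ := inv_nonneg.2 hc₁.le
  have hscaled : (c + 1)⁻¹ • (c • u ⊓ v) ≤ u ⊓ v := by
    refine le_inf ?_ ?_
    · calc (c + 1)⁻¹ • (c • u ⊓ v) ≤ (c + 1)⁻¹ • (c • u) :=
            smul_le_smul_of_nonneg_left inf_le_left hinv
        _ = ((c + 1)⁻¹ * c) • u := smul_smul _ _ _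
        _ ≤ u := smul_le_of_le_one_left hu <| by
            rw [inv_mul_le_iff₀ hc₁]; linarith
    · calc (c + 1)⁻¹ • (c • u ⊓ v) ≤ (c + 1)⁻¹ • v :=
            smul_le_smul_of_nonneg_left inf_le_right hinv
        _ ≤ v := smul_le_of_le_one_left hv (inv_le_one_of_one_le₀ (by linarith))
  have hzero : (c + 1)⁻¹ • (c • u ⊓ v) = 0 :=
    le_antisymm (huv ▸ hscaled) (smul_nonneg hinv (le_inf (smul_nonneg hc hu) hv))
  exact (smul_eq_zero.1 hzero).resolve_left (inv_ne_zero hc₁.ne')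

theorem posPart_inf_add_smul_sub_add_smul (x y : B) {s t : ℝ} (hst : s ≤ t) :
    (x ⊓ y + t • (x - y)⁺ - (y + s • (x - y)⁺))⁺ = (t - s) • (x - y)⁺ := by
  have hdiff : x ⊓ y + t • (x - y)⁺ - (y + s • (x - y)⁺) = (t - s) • (x - y)⁺ - (x - y)⁻ := by
    rw [inf_eq_sub_posPart_sub]
    linear_combination (norm := module) -(posPart_sub_negPart (x - y))
  rw [hdiff, posPart_sub_eq_of_inf_eq_zero]
  exact smul_inf_eq_zero_of_inf_eq_zero (posPart_inf_negPart_eq_zero _) (sub_nonneg.2 hst)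

end LatticeModule

theorem add_mul_sub_le_of_mem_RSubdiff {B : Type*} [AddCommGroup B] [Module ℝ B]
    [TopologicalSpace B] {E : B → ℝ} {p w : B} {s : ℝ} {xs : B →L[ℝ] ℝ}
    (hxs : xs ∈ RSubdiff E (p + s • w)) (u : ℝ) :
    E (p + s • w) + xs w * (u - s) ≤ E (p + u • w) := by
  have h := hxs (p + u • w)
  rw [show p + u • w - (p + s • w) = (u - s) • w by module, map_smul, smul_eq_mul] at h
  linarith

theorem submodular_of_subdiff_Tmonotone_general
    {B : Type*} [AddCommGroup B] [Module ℝ B] [Lattice B]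
    [TopologicalSpace B]
    [CovariantClass B B (· + ·) (· ≤ ·)]
    (hsmul : ∀ (c : ℝ) (x : B), 0 ≤ c → 0 ≤ x → 0 ≤ c • x)
    (E : B → ℝ)
    (hne : ∀ x : B, (RSubdiff E x).Nonempty)
    (hmono : ∀ (x y : B) (xs ys : B →L[ℝ] ℝ), xs ∈ RSubdiff E x → ys ∈ RSubdiff E y →
      0 ≤ (xs - ys) ((x - y) ⊔ 0)) :
    ∀ x y : B, E (x ⊓ y) + E (x ⊔ y) ≤ E x + E y := by
  have : IsOrderedAddMonoid B :=
    ⟨fun _ _ h c => add_le_add_left h c, fun _ _ h c => add_le_add_right h c⟩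
  have : PosSMulMono ℝ B := .of_smul_nonneg fun c hc z hz => hsmul c z hc hz
  intro x y
  choose q hq using hne
  set w := (x - y)⁺
  have hslope : ∀ s t : ℝ, s < t → q (y + s • w) w ≤ q (x ⊓ y + t • w) w := by
    intro s t hst
    have h := hmono _ _ _ _ (hq (x ⊓ y + t • w)) (hq (y + s • w))
    rw [← posPart_def, posPart_inf_add_smul_sub_add_smul x y hst.le, map_smul, smul_eq_mul,
      sub_apply] at h
    exact sub_nonneg.1 (nonneg_of_mul_nonneg_right h (sub_pos.2 hst))
  have h := sub_le_sub_of_subgradient_lt (fun s u => add_mul_sub_le_of_mem_RSubdiff (hq _) u)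
    (fun t u => add_mul_sub_le_of_mem_RSubdiff (hq _) u) hslope zero_le_one
  have hsup : x ⊔ y = y + w := sup_eq_add_posPart_sub x y
  have hinf : x ⊓ y + w = x := by rw [inf_eq_sub_posPart_sub, sub_add_cancel]
  rw [zero_smul, add_zero, add_zero, one_smul, ← hsup, hinf] at h
  linarith

theorem submodular_of_subdiff_Tmonotone
    {B : Type*} [AddCommGroup B] [Module ℝ B] [Lattice B]
    [TopologicalSpace B] [IsTopologicalAddGroup B] [ContinuousSMul ℝ B]
    [T2Space B] [LocallyConvexSpace ℝ B]
    [CovariantClass B B (· + ·) (· ≤ ·)]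
    (hsmul : ∀ (c : ℝ) (x : B), 0 ≤ c → 0 ≤ x → 0 ≤ c • x)
    (E : B → ℝ) (hconv : ConvexOn ℝ Set.univ E)
    (hne : ∀ x : B, (RSubdiff E x).Nonempty)
    (hmono : ∀ (x y : B) (xs ys : B →L[ℝ] ℝ), xs ∈ RSubdiff E x → ys ∈ RSubdiff E y →
      0 ≤ (xs - ys) ((x - y) ⊔ 0)) :
    ∀ x y : B, E (x ⊓ y) + E (x ⊔ y) ≤ E x + E y :=
  submodular_of_subdiff_Tmonotone_general hsmul E hne hmono
end

section
/- Abstract Lewy–Stampacchia inequality (lower bound): Let B be a topological vector lattice, E : B → ℝ ∪ {+∞} convex and submodular, φ ≺ ψ in B, and ū a minimizer of E on the order interval [φ, ψ]. Assume E is continuous at some point of dom E ∩ [φ, ψ]. Then for every w* ∈ ∂E(φ) that can be written as a difference of elements of the dual cone P*, there exists x* ∈ ∂E(ū), also a difference of elements of P*, with x* ≺ w* ⊔ 0 (i.e. (w* ⊔ 0) − x* ∈ P*). -/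
/-- A continuous linear functional is a difference of elements of the dual cone `P*`. -/
def IsPosDiff {B : Type*} [AddCommGroup B] [Module ℝ B] [TopologicalSpace B] [Lattice B]
    (w : B →L[ℝ] ℝ) : Prop :=
  ∃ w₁ w₂ : B →L[ℝ] ℝ, (∀ z : B, 0 ≤ z → 0 ≤ w₁ z) ∧ (∀ z : B, 0 ≤ z → 0 ≤ w₂ z) ∧ w = w₁ - w₂

/-!
Submodularity and the subgradient inequality at `φ` show that `ū` also minimizes
`u ↦ E u + (w* ⊔ 0) (φ - u)⁺` over `u ≤ ψ`: add `E ū ≤ E (u ⊔ φ)` to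
`E φ - w* (φ - u)⁺ ≤ E (u ⊓ φ)`. The penalty is convex in `u`, because `w* ⊔ 0` is monotone and
sublinear on the positive cone (Riesz decomposition). The Hahn–Banach sandwich theorem, which
applies thanks to the point of continuity, then yields an affine minorant `ℓ + a` of `E` lying
above `E ū - (w* ⊔ 0) (φ - ·)⁺` on `u ≤ ψ`. Evaluating at `ū` gives `ℓ ∈ ∂E(ū)`, and evaluating at
`ū - v` gives `ℓ v ≤ (w* ⊔ 0) v`.
-/

open Set

section VectorLattice

variable {B : Type*} [AddCommGroup B] [Lattice B] [IsOrderedAddMonoid B]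

theorem exists_add_eq_of_le_add {x y z : B} (hz : 0 ≤ z) (hx : 0 ≤ x) (hy : 0 ≤ y)
    (h : z ≤ x + y) : ∃ z₁ ∈ Icc 0 x, ∃ z₂ ∈ Icc 0 y, z₁ + z₂ = z := by
  refine ⟨z ⊓ x, ⟨le_inf hz hx, inf_le_right⟩, (z - x)⁺, ⟨posPart_nonneg _, ?_⟩, ?_⟩
  · exact sup_le (sub_le_iff_le_add'.2 h) hy
  · rw [inf_eq_sub_posPart_sub, sub_add_cancel]

variable [Module ℝ B] [PosSMulMono ℝ B]

theorem posPart_smul_add_smul_le {a b : ℝ} (ha : 0 ≤ a) (hb : 0 ≤ b) (x y : B) :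
    (a • x + b • y)⁺ ≤ a • x⁺ + b • y⁺ :=
  sup_le (add_le_add (smul_le_smul_of_nonneg_left (le_posPart x) ha)
      (smul_le_smul_of_nonneg_left (le_posPart y) hb))
    (add_nonneg (smul_nonneg ha (posPart_nonneg x)) (smul_nonneg hb (posPart_nonneg y)))

end VectorLattice

section DualPosPart

variable {B : Type*} [AddCommGroup B] [Lattice B] [Module ℝ B] [TopologicalSpace B]

/-- `(w ⊔ 0) v` in the dual lattice, for `0 ≤ v` (otherwise `Icc 0 v` may be empty and the value
is junk). -/
noncomputable def dualPosPart (w : B →L[ℝ] ℝ) (v : B) : ℝ :=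
  sSup (w '' Icc 0 v)

theorem dualPosPart_eq_sSup (w : B →L[ℝ] ℝ) (v : B) :
    dualPosPart w v = sSup {r : ℝ | ∃ z : B, 0 ≤ z ∧ z ≤ v ∧ w z = r} := by
  simp only [dualPosPart, image, mem_Icc, and_assoc]

@[simp]
theorem dualPosPart_zero (w : B →L[ℝ] ℝ) : dualPosPart w 0 = 0 := by
  simp [dualPosPart]

variable [IsOrderedAddMonoid B] {w₁ w₂ w : B →L[ℝ] ℝ}

theorem sub_apply_le_of_mem_Icc (h₁ : ∀ z, 0 ≤ z → 0 ≤ w₁ z) (h₂ : ∀ z, 0 ≤ z → 0 ≤ w₂ z)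
    {v z : B} (hz : z ∈ Icc 0 v) : (w₁ - w₂) z ≤ w₁ v := by
  have hv : w₁ z ≤ w₁ v := by simpa using h₁ (v - z) (sub_nonneg.2 hz.2)
  rw [FunLike.coe_sub, Pi.sub_apply]
  linarith [h₂ z hz.1]

theorem dualPosPart_sub_le (h₁ : ∀ z, 0 ≤ z → 0 ≤ w₁ z) (h₂ : ∀ z, 0 ≤ z → 0 ≤ w₂ z)
    {v : B} (hv : 0 ≤ v) : dualPosPart (w₁ - w₂) v ≤ w₁ v :=
  csSup_le ((nonempty_Icc.2 hv).image _) <|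
    forall_mem_image.2 fun _ hz ↦ sub_apply_le_of_mem_Icc h₁ h₂ hz

theorem IsPosDiff.bddAbove_image_Icc (hw : IsPosDiff w) (v : B) : BddAbove (w '' Icc 0 v) := by
  obtain ⟨w₁, w₂, h₁, h₂, rfl⟩ := hw
  exact ⟨w₁ v, forall_mem_image.2 fun _ hz ↦ sub_apply_le_of_mem_Icc h₁ h₂ hz⟩

theorem IsPosDiff.le_dualPosPart (hw : IsPosDiff w) {v z : B} (hz : z ∈ Icc 0 v) :
    w z ≤ dualPosPart w v :=
  le_csSup (hw.bddAbove_image_Icc v) (mem_image_of_mem w hz)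

theorem IsPosDiff.dualPosPart_mono (hw : IsPosDiff w) {v v' : B} (hv : 0 ≤ v) (h : v ≤ v') :
    dualPosPart w v ≤ dualPosPart w v' :=
  csSup_le_csSup (hw.bddAbove_image_Icc v') ((nonempty_Icc.2 hv).image _)
    (image_mono (Icc_subset_Icc_right h))

theorem IsPosDiff.dualPosPart_add_le (hw : IsPosDiff w) {x y : B} (hx : 0 ≤ x) (hy : 0 ≤ y) :
    dualPosPart w (x + y) ≤ dualPosPart w x + dualPosPart w y := by
  refine csSup_le ((nonempty_Icc.2 (add_nonneg hx hy)).image _) (forall_mem_image.2 ?_)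
  rintro z ⟨hz, hzxy⟩
  obtain ⟨z₁, hz₁, z₂, hz₂, rfl⟩ := exists_add_eq_of_le_add hz hx hy hzxy
  rw [map_add]
  exact add_le_add (hw.le_dualPosPart hz₁) (hw.le_dualPosPart hz₂)

theorem IsPosDiff.of_le_dualPosPart (hw : IsPosDiff w) {x : B →L[ℝ] ℝ}
    (hx : ∀ v, 0 ≤ v → x v ≤ dualPosPart w v) : IsPosDiff x := by
  obtain ⟨w₁, w₂, h₁, h₂, rfl⟩ := hw
  refine ⟨w₁, w₁ - x, h₁, fun v hv ↦ ?_, (sub_sub_cancel w₁ x).symm⟩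
  simpa using (hx v hv).trans (dualPosPart_sub_le h₁ h₂ hv)

theorem IsPosDiff.apply_le_dualPosPart_of_le_add {φ ψ ū : B} (hw : IsPosDiff w)
    (hφū : φ ≤ ū) (hūψ : ū ≤ ψ) {ℓ : B →L[ℝ] ℝ} {a e : ℝ}
    (hℓ : ∀ u ∈ Iic ψ, e - dualPosPart w (φ - u)⁺ ≤ ℓ u + a) (hℓū : ℓ ū + a ≤ e)
    {v : B} (hv : 0 ≤ v) : ℓ v ≤ dualPosPart w v := by
  have h₁ := hℓ (ū - v) ((sub_le_self ū hv).trans hūψ)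
  have h₂ : dualPosPart w (φ - (ū - v))⁺ ≤ dualPosPart w v := by
    refine hw.dualPosPart_mono (posPart_nonneg _) (sup_le ?_ hv)
    rw [sub_sub_eq_add_sub, add_sub_right_comm]
    exact add_le_of_nonpos_left (sub_nonpos.2 hφū)
  rw [map_sub] at h₁
  linarith

variable [PosSMulMono ℝ B]

theorem IsPosDiff.dualPosPart_smul_le (hw : IsPosDiff w) {c : ℝ} (hc : 0 ≤ c) {v : B}
    (hv : 0 ≤ v) : dualPosPart w (c • v) ≤ c * dualPosPart w v := by
  rcases hc.eq_or_lt with rfl | hc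
  · simp
  refine csSup_le ((nonempty_Icc.2 (smul_nonneg hc.le hv)).image _) (forall_mem_image.2 ?_)
  rintro z ⟨hz, hzv⟩
  have hz' : c⁻¹ • z ∈ Icc 0 v := by
    refine ⟨smul_nonneg (inv_nonneg.2 hc.le) hz, ?_⟩
    simpa [smul_smul, inv_mul_cancel₀ hc.ne'] using
      smul_le_smul_of_nonneg_left hzv (inv_nonneg.2 hc.le)
  calc w z = c * w (c⁻¹ • z) := by rw [map_smul, smul_eq_mul, mul_inv_cancel_left₀ hc.ne']
    _ ≤ c * dualPosPart w v := mul_le_mul_of_nonneg_left (hw.le_dualPosPart hz') hc.le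

theorem IsPosDiff.convexOn_dualPosPart_posPart_sub (hw : IsPosDiff w) (φ : B) :
    ConvexOn ℝ univ fun u ↦ dualPosPart w (φ - u)⁺ := by
  refine ⟨convex_univ, fun u _ u' _ a b ha hb hab ↦ ?_⟩
  have hsplit : φ - (a • u + b • u') = a • (φ - u) + b • (φ - u') := by
    rw [smul_sub, smul_sub, ← add_sub_add_comm, ← add_smul, hab, one_smul]
  have hu := posPart_nonneg (φ - u)
  have hu' := posPart_nonneg (φ - u')
  calc dualPosPart w (φ - (a • u + b • u'))⁺
      ≤ dualPosPart w (a • (φ - u)⁺ + b • (φ - u')⁺) := by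
        rw [hsplit]
        exact hw.dualPosPart_mono (posPart_nonneg _) (posPart_smul_add_smul_le ha hb _ _)
    _ ≤ dualPosPart w (a • (φ - u)⁺) + dualPosPart w (b • (φ - u')⁺) :=
        hw.dualPosPart_add_le (smul_nonneg ha hu) (smul_nonneg hb hu')
    _ ≤ a • dualPosPart w (φ - u)⁺ + b • dualPosPart w (φ - u')⁺ :=
        add_le_add (hw.dualPosPart_smul_le ha hu) (hw.dualPosPart_smul_le hb hu')

end DualPosPart

theorem IsMinOn.sub_apply_posPart_le_of_submodular {B : Type*} [AddCommGroup B] [Lattice B]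
    [IsOrderedAddMonoid B] [Module ℝ B] [TopologicalSpace B] {E : B → EReal}
    (hbot : ∀ x, E x ≠ ⊥) (hsub : ∀ x y, E (x ⊓ y) + E (x ⊔ y) ≤ E x + E y)
    {φ ψ ū : B} (hφψ : φ ≤ ψ) (hmin : IsMinOn E (Icc φ ψ) ū) {e : ℝ} (he : E ū = e)
    {w : B →L[ℝ] ℝ} (hw : w ∈ ESubdiff E φ) {u : B} (hu : u ≤ ψ) :
    ((e - w (φ - u)⁺ : ℝ) : EReal) ≤ E u := by
  by_cases hEu : E u = ⊤
  · simp [hEu]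
  obtain ⟨r, hr⟩ : ∃ r : ℝ, E u = r := ⟨_, (EReal.coe_toReal hEu (hbot u)).symm⟩
  obtain ⟨p, hp⟩ : ∃ p : ℝ, E φ = p := ⟨_, (EReal.coe_toReal hw.1 (hbot φ)).symm⟩
  have h := (add_le_add (hw.2 (u ⊓ φ))
    (isMinOn_iff.1 hmin (u ⊔ φ) ⟨le_sup_right, sup_le hu hφψ⟩)).trans (hsub u φ)
  have hinf : u ⊓ φ - φ = -(φ - u)⁺ := by rw [inf_comm, inf_eq_sub_posPart_sub]; abel
  rw [hp, he, hr, hinf, map_neg] at h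
  rw [hr]
  norm_cast at h ⊢
  linarith

theorem mem_eSubdiff_of_affine_le {B : Type*} [AddCommGroup B] [Module ℝ B] [TopologicalSpace B]
    {E : B → EReal} {ℓ : B →L[ℝ] ℝ} {a e : ℝ} (hℓ : ∀ x, ((ℓ x + a : ℝ) : EReal) ≤ E x)
    {ū : B} (he : E ū = e) (hℓū : e ≤ ℓ ū + a) : ℓ ∈ ESubdiff E ū := by
  refine ⟨by simp [he], fun z ↦ le_trans ?_ (hℓ z)⟩
  rw [he, ← EReal.coe_add, EReal.coe_le_coe_iff, map_sub]
  linarith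

section Sandwich

variable {B : Type*} {f : B → EReal}

theorem convex_strictEpigraph [AddCommGroup B] [Module ℝ B] (hbot : ∀ x, f x ≠ ⊥)
    (hconv : ∀ (x y : B) (t : ℝ), 0 ≤ t → t ≤ 1 →
      f (t • x + (1 - t) • y) ≤ (t : EReal) * f x + ((1 - t) : EReal) * f y) :
    Convex ℝ {p : B × ℝ | f p.1 < p.2} := by
  rintro ⟨x, r⟩ (hx : f x < r) ⟨y, s⟩ (hy : f y < s) a b ha hb hab
  obtain rfl : b = 1 - a := eq_sub_of_add_eq' hab
  show f (a • x + (1 - a) • y) < ((a • r + (1 - a) • s : ℝ) : EReal)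
  refine (hconv x y a ha (by linarith)).trans_lt ?_
  lift f x to ℝ using ⟨hx.ne_top, hbot x⟩ with fx
  lift f y to ℝ using ⟨hy.ne_top, hbot y⟩ with fy
  norm_cast at hx hy ⊢
  rcases ha.eq_or_lt with rfl | ha
  · simpa using hy
  simp only [smul_eq_mul]
  nlinarith

theorem strictEpigraph_mem_nhds [TopologicalSpace B] {x : B} {r : ℝ} (hf : ContinuousAt f x)
    (hr : f x < r) : {p : B × ℝ | f p.1 < p.2} ∈ nhds (x, r) := by
  have hcont : ContinuousAt (fun p : B × ℝ ↦ (f p.1, (p.2 : EReal))) (x, r) :=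
    (hf.comp continuousAt_fst).prodMk (continuous_coe_real_ereal.comp continuous_snd).continuousAt
  exact hcont.preimage_mem_nhds ((isOpen_lt continuous_fst continuous_snd).mem_nhds hr)

theorem exists_affine_between_of_concaveOn_le [AddCommGroup B] [Module ℝ B] [TopologicalSpace B]
    [IsTopologicalAddGroup B] [ContinuousSMul ℝ B] (hbot : ∀ x, f x ≠ ⊥)
    (hconv : ∀ (x y : B) (t : ℝ), 0 ≤ t → t ≤ 1 →
      f (t • x + (1 - t) • y) ≤ (t : EReal) * f x + ((1 - t) : EReal) * f y)
    {C : Set B} {h : B → ℝ} (hh : ConcaveOn ℝ C h) (hhf : ∀ x ∈ C, (h x : EReal) ≤ f x)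
    {x₀ : B} (hx₀ : x₀ ∈ C) (hfx₀ : f x₀ ≠ ⊤) (hcont : ContinuousAt f x₀) :
    ∃ (ℓ : B →L[ℝ] ℝ) (a : ℝ), (∀ x ∈ C, h x ≤ ℓ x + a) ∧ ∀ x, ((ℓ x + a : ℝ) : EReal) ≤ f x := by
  set epi := {p : B × ℝ | f p.1 < p.2}
  have hepi : Convex ℝ epi := convex_strictEpigraph hbot hconv
  have hint : ∀ r : ℝ, f x₀ < r → (x₀, r) ∈ interior epi := fun r hr ↦
    mem_interior_iff_mem_nhds.2 (strictEpigraph_mem_nhds hcont hr)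
  have hdisj : Disjoint (interior epi) {p | p.1 ∈ C ∧ p.2 ≤ h p.1} := by
    refine disjoint_left.2 fun p hp ⟨hpC, hph⟩ ↦ ?_
    have hp' : p ∈ epi := interior_subset hp
    exact hp'.not_ge ((EReal.coe_le_coe_iff.2 hph).trans (hhf p.1 hpC))
  obtain ⟨F, c, hF_int, hF_hyp⟩ :=
    geometric_hahn_banach_open hepi.interior isOpen_interior hh.convex_hypograph hdisj
  lift f x₀ to ℝ using ⟨hfx₀, hbot x₀⟩ with y₀
  have hF_epi : ∀ p ∈ epi, F p ≤ c := by
    have hne : (interior epi).Nonempty := ⟨_, hint (y₀ + 1) (by exact_mod_cast lt_add_one y₀)⟩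
    refine fun p hp ↦ closure_minimal (fun q hq ↦ (hF_int q hq).le)
      (isClosed_Iic.preimage F.continuous) ?_
    rw [hepi.closure_interior_eq_closure_of_nonempty_interior hne]
    exact subset_closure hp
  set s := F (0, 1)
  have hF : ∀ x r, F (x, r) = F (x, 0) + r * s := fun x r ↦ by
    rw [← smul_eq_mul, ← map_smul, ← map_add, Prod.smul_mk, smul_zero, smul_eq_mul, mul_one,
      Prod.mk_add_mk, add_zero, zero_add]
  -- `F` is not vertical: it stays below `c` at `(x₀, r)` for every large `r`.
  have hs : s < 0 := by
    by_contra! hs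
    set R := max (y₀ + 1) (h x₀)
    have h₁ := hF_int _ (hint R (by exact_mod_cast (lt_add_one y₀).trans_le (le_max_left _ _)))
    have h₂ := hF_hyp (x₀, h x₀) ⟨hx₀, le_rfl⟩
    rw [hF] at h₁ h₂
    nlinarith [mul_le_mul_of_nonneg_right (le_max_right (y₀ + 1) (h x₀)) hs]
  set ℓ : B →L[ℝ] ℝ := -s⁻¹ • F.comp (.inl ℝ B ℝ)
  have hℓ : ∀ x, ℓ x + c / s = (c - F (x, 0)) / s := fun x ↦ by simp [ℓ]; ring
  refine ⟨ℓ, c / s, fun x hx ↦ ?_, fun x ↦ ?_⟩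
  · rw [hℓ, le_div_iff_of_neg hs]
    linarith [hF x (h x) ▸ hF_hyp (x, h x) ⟨hx, le_rfl⟩]
  · refine EReal.le_of_forall_lt_iff_le.1 fun r hr ↦ ?_
    rw [EReal.coe_le_coe_iff, hℓ, div_le_iff_of_neg hs]
    linarith [hF x r ▸ hF_epi (x, r) hr]

end Sandwich

theorem abstract_lewy_stampacchia_lower_general
    {B : Type*} [AddCommGroup B] [Module ℝ B] [Lattice B]
    [TopologicalSpace B] [IsTopologicalAddGroup B] [ContinuousSMul ℝ B]
    [CovariantClass B B (· + ·) (· ≤ ·)]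
    (hsmul : ∀ (c : ℝ) (x : B), 0 ≤ c → 0 ≤ x → 0 ≤ c • x)
    (E : B → EReal) (hbot : ∀ x, E x ≠ ⊥)
    (hconv : ∀ (x y : B) (t : ℝ), 0 ≤ t → t ≤ 1 →
      E (t • x + (1 - t) • y) ≤ (t : EReal) * E x + ((1 - t) : EReal) * E y)
    (hsub : ∀ x y : B, E (x ⊓ y) + E (x ⊔ y) ≤ E x + E y)
    (φ ψ : B) (hφψ : φ ≤ ψ)
    (ubar : B) (hubar : φ ≤ ubar ∧ ubar ≤ ψ ∧ ∀ u : B, φ ≤ u → u ≤ ψ → E ubar ≤ E u)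
    (hcont : ∃ u : B, φ ≤ u ∧ u ≤ ψ ∧ E u ≠ ⊤ ∧ ContinuousAt E u)
    (ws : B →L[ℝ] ℝ) (hws : ws ∈ ESubdiff E φ) (hwsd : IsPosDiff ws) :
    ∃ xs : B →L[ℝ] ℝ, xs ∈ ESubdiff E ubar ∧ IsPosDiff xs ∧
      ∀ v : B, 0 ≤ v → xs v ≤ sSup {r : ℝ | ∃ z : B, 0 ≤ z ∧ z ≤ v ∧ ws z = r} := by
  have : IsOrderedAddMonoid B := { add_le_add_left := fun _ _ h c ↦ add_le_add_left h c }
  have : PosSMulMono ℝ B := .of_smul_nonneg fun c hc x hx ↦ hsmul c x hc hx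
  obtain ⟨hφu, huψ, hmin⟩ := hubar
  obtain ⟨u₀, hφu₀, hu₀ψ, hEu₀, hcont₀⟩ := hcont
  obtain ⟨e, he⟩ : ∃ e : ℝ, E ubar = e :=
    ⟨_, (EReal.coe_toReal (ne_top_of_le_ne_top hEu₀ (hmin u₀ hφu₀ hu₀ψ)) (hbot ubar)).symm⟩
  have hlower : ∀ u ∈ Iic ψ, ((e - dualPosPart ws (φ - u)⁺ : ℝ) : EReal) ≤ E u := fun u hu ↦
    (EReal.coe_le_coe_iff.2 <| sub_le_sub_left
        (hwsd.le_dualPosPart ⟨posPart_nonneg _, le_rfl⟩) e).trans <|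
      (isMinOn_iff.2 fun u hu ↦ hmin u hu.1 hu.2).sub_apply_posPart_le_of_submodular
        hbot hsub hφψ he hws hu
  have hconc : ConcaveOn ℝ (Iic ψ) fun u ↦ e - dualPosPart ws (φ - u)⁺ :=
    (concaveOn_const e (convex_Iic ψ)).sub
      ((hwsd.convexOn_dualPosPart_posPart_sub φ).subset (subset_univ _) (convex_Iic ψ))
  obtain ⟨ℓ, a, hℓh, hℓE⟩ :=
    exists_affine_between_of_concaveOn_le hbot hconv hconc hlower hu₀ψ hEu₀ hcont₀
  have hℓū : ℓ ubar + a ≤ e := by exact_mod_cast he ▸ hℓE ubar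
  have hℓS : ∀ v, 0 ≤ v → ℓ v ≤ dualPosPart ws v := fun v hv ↦
    hwsd.apply_le_dualPosPart_of_le_add hφu huψ hℓh hℓū hv
  have hℓ : ℓ ∈ ESubdiff E ubar := mem_eSubdiff_of_affine_le hℓE he <| by
    simpa [posPart_eq_zero.2 (sub_nonpos.2 hφu)] using hℓh ubar huψ
  exact ⟨ℓ, hℓ, hwsd.of_le_dualPosPart hℓS, fun v hv ↦ dualPosPart_eq_sSup ws v ▸ hℓS v hv⟩

theorem abstract_lewy_stampacchia_lower
    {B : Type*} [AddCommGroup B] [Module ℝ B] [Lattice B]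
    [TopologicalSpace B] [IsTopologicalAddGroup B] [ContinuousSMul ℝ B]
    [T2Space B] [LocallyConvexSpace ℝ B]
    [CovariantClass B B (· + ·) (· ≤ ·)]
    (hsmul : ∀ (c : ℝ) (x : B), 0 ≤ c → 0 ≤ x → 0 ≤ c • x)
    (E : B → EReal) (hbot : ∀ x, E x ≠ ⊥)
    (hconv : ∀ (x y : B) (t : ℝ), 0 ≤ t → t ≤ 1 →
      E (t • x + (1 - t) • y) ≤ (t : EReal) * E x + ((1 - t) : EReal) * E y)
    (hsub : ∀ x y : B, E (x ⊓ y) + E (x ⊔ y) ≤ E x + E y)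
    (φ ψ : B) (hφψ : φ ≤ ψ)
    (ubar : B) (hubar : φ ≤ ubar ∧ ubar ≤ ψ ∧ ∀ u : B, φ ≤ u → u ≤ ψ → E ubar ≤ E u)
    (hcont : ∃ u : B, φ ≤ u ∧ u ≤ ψ ∧ E u ≠ ⊤ ∧ ContinuousAt E u)
    (ws : B →L[ℝ] ℝ) (hws : ws ∈ ESubdiff E φ) (hwsd : IsPosDiff ws) :
    ∃ xs : B →L[ℝ] ℝ, xs ∈ ESubdiff E ubar ∧ IsPosDiff xs ∧
      ∀ v : B, 0 ≤ v → xs v ≤ sSup {r : ℝ | ∃ z : B, 0 ≤ z ∧ z ≤ v ∧ ws z = r} :=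
  abstract_lewy_stampacchia_lower_general hsmul E hbot hconv hsub φ ψ hφψ ubar hubar hcont ws hws
    hwsd
end

section
/- Key step of the Lewy–Stampacchia proof: Let B be a topological vector lattice, E : B → ℝ ∪ {+∞} convex and submodular, φ ∈ B, w* ∈ ∂E(φ), and let λ ∈ B* satisfy λ ≥ w* ⊔ 0 on the positive cone (in particular λ(z) ≥ ⟨w*, z⟩ and λ(z) ≥ 0 for z ≻ 0). Then for every u ≺ ū (any ū with φ ≺ ū) it holds E(u ⊔ φ) − λ(u ⊔ φ) ≤ E(u) − λ(u). -/
/-!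
Test the subgradient inequality at `φ` against `z = u ⊓ φ` and add it to submodularity at
`(u, φ)`: the finite value `E φ` cancels and leaves `⟨w*, u ⊓ φ - φ⟩ + E (u ⊔ φ) ≤ E u`.
Since `u ⊓ φ - φ = u - u ⊔ φ` is `≤ 0`, the hypothesis `λ ≥ w*` on the positive cone gives
`λ (u - u ⊔ φ) ≤ ⟨w*, u - u ⊔ φ⟩`, which is the claim after rearranging.
-/

theorem inf_sub_right_eq_sub_sup {α : Type*} [Lattice α] [AddCommGroup α] [AddLeftMono α]
    (a b : α) : a ⊓ b - b = a - a ⊔ b :=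
  sub_eq_sub_iff_add_eq_add.2 (inf_add_sup a b)

theorem EReal.sub_coe_le_sub_coe_iff {x y : EReal} {a b : ℝ} :
    x - a ≤ y - b ↔ ((b - a : ℝ) : EReal) + x ≤ y := by
  induction x using EReal.rec <;> induction y using EReal.rec <;>
    simp [← EReal.coe_add, ← EReal.coe_sub]
  constructor <;> intro h <;> linarith

theorem coe_apply_inf_sub_add_le_of_mem_ESubdiff {B : Type*} [AddCommGroup B] [Module ℝ B]
    [Lattice B] [TopologicalSpace B] {E : B → EReal}
    (hsub : ∀ x y : B, E (x ⊓ y) + E (x ⊔ y) ≤ E x + E y)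
    {φ : B} (hφ : E φ ≠ ⊥) {ws : B →L[ℝ] ℝ} (hws : ws ∈ ESubdiff E φ) (u : B) :
    ((ws (u ⊓ φ - φ) : ℝ) : EReal) + E (u ⊔ φ) ≤ E u := by
  obtain ⟨hφtop, hsubgrad⟩ := hws
  lift E φ to ℝ using ⟨hφtop, hφ⟩ with p hp
  refine (EReal.addLECancellable_coe p).add_le_add_iff_right.1 ?_
  calc ((ws (u ⊓ φ - φ) : ℝ) : EReal) + E (u ⊔ φ) + p
      = ((ws (u ⊓ φ - φ) : ℝ) : EReal) + p + E (u ⊔ φ) := add_right_comm _ _ _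
    _ ≤ E (u ⊓ φ) + E (u ⊔ φ) := by gcongr; simpa [hp] using hsubgrad (u ⊓ φ)
    _ ≤ E u + p := hp ▸ hsub u φ

theorem lewy_stampacchia_key_step_general
    {B : Type*} [AddCommGroup B] [Module ℝ B] [Lattice B]
    [TopologicalSpace B]
    [CovariantClass B B (· + ·) (· ≤ ·)]
    (E : B → EReal) (hbot : ∀ x, E x ≠ ⊥)
    (hsub : ∀ x y : B, E (x ⊓ y) + E (x ⊔ y) ≤ E x + E y)
    (φ : B) (ws : B →L[ℝ] ℝ) (hws : ws ∈ ESubdiff E φ)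
    (lam : B →L[ℝ] ℝ) (hlam : ∀ z : B, 0 ≤ z → ws z ≤ lam z ∧ 0 ≤ lam z)
    (u : B) :
    E (u ⊔ φ) - ((lam (u ⊔ φ) : ℝ) : EReal) ≤ E u - ((lam u : ℝ) : EReal) := by
  have hlam_le_ws : lam (u ⊓ φ - φ) ≤ ws (u ⊓ φ - φ) := by
    have := (hlam (φ - u ⊓ φ) (sub_nonneg.2 inf_le_right)).1
    rw [← neg_sub φ, map_neg, map_neg]
    linarith
  rw [EReal.sub_coe_le_sub_coe_iff, ← map_sub, ← inf_sub_right_eq_sub_sup]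
  calc ((lam (u ⊓ φ - φ) : ℝ) : EReal) + E (u ⊔ φ)
      ≤ ((ws (u ⊓ φ - φ) : ℝ) : EReal) + E (u ⊔ φ) := by gcongr
    _ ≤ E u := coe_apply_inf_sub_add_le_of_mem_ESubdiff hsub (hbot φ) hws u

theorem lewy_stampacchia_key_step
    {B : Type*} [AddCommGroup B] [Module ℝ B] [Lattice B]
    [TopologicalSpace B] [IsTopologicalAddGroup B] [ContinuousSMul ℝ B]
    [T2Space B] [LocallyConvexSpace ℝ B]
    [CovariantClass B B (· + ·) (· ≤ ·)]
    (hsmul : ∀ (c : ℝ) (x : B), 0 ≤ c → 0 ≤ x → 0 ≤ c • x)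
    (E : B → EReal) (hbot : ∀ x, E x ≠ ⊥)
    (hconv : ∀ (x y : B) (t : ℝ), 0 ≤ t → t ≤ 1 →
      E (t • x + (1 - t) • y) ≤ (t : EReal) * E x + ((1 - t) : EReal) * E y)
    (hsub : ∀ x y : B, E (x ⊓ y) + E (x ⊔ y) ≤ E x + E y)
    (φ : B) (ws : B →L[ℝ] ℝ) (hws : ws ∈ ESubdiff E φ)
    (lam : B →L[ℝ] ℝ) (hlam : ∀ z : B, 0 ≤ z → ws z ≤ lam z ∧ 0 ≤ lam z)
    (ubar u : B) (hφu : φ ≤ ubar) (hu : u ≤ ubar) :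
    E (u ⊔ φ) - ((lam (u ⊔ φ) : ℝ) : EReal) ≤ E u - ((lam u : ℝ) : EReal) :=
  lewy_stampacchia_key_step_general E hbot hsub φ ws hws lam hlam u
end
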